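/- arXiv:2306.11903 — 2 statements merged into one kernel-verified Lean document; each statement's English description precedes it below -/
import Mathlib

section
/- Let d ∈ ℕ, let L₁, L₂ : EuclideanSpace ℝ (Fin d) → ℝ be three times continuously differentiable, let α > 0, and fix w₀. For h > 0 define the modified loss L̃_h(w) = L₁(w) + α·L₂(w) + (h/4)·‖gradient L₁ w‖² + (h·α²/4)·‖gradient L₂ w‖², and the Lie bracket [∇L₁,∇L₂](w) = (fderiv ℝ (gradient L₂) w)(gradient L₁ w) − (fderiv ℝ (gradient L₁) w)(gradient L₂ w). Suppose for each sufficiently small h > 0 the curve w_h : ℝ → EuclideanSpace ℝ (Fin d) satisfies w_h(0) = w₀ and HasDerivAt w_h (−gradient L̃_h (w_h t) + (h·α/2) • [∇L₁,∇L₂](w_h t)) t for all t ∈ [0,h]. Let w₂(h) = w₁(h) − α·h·gradient L₂ (w₁(h)) with w₁(h) = w₀ − h·gradient L₁ (w₀) be the composition of the two discrete gradient updates. Then w_h(h) − w₂(h) = O(h³) as h → 0⁺. -/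
/-!
Along one step, the modified flow `ẇ = G(w) + h H(w)`, with leading field `G = -(∇L₁ + α∇L₂)`
and correction `H`, has the Taylor expansion
`w(h) = w₀ + h G + h² (H + ½ DG·G) + O(h³)`,
uniformly controlled because the trajectory stays within `O(h)` of `w₀` on `[0, h]`.
The two gradient steps expand as `w₀ + h G + α h² D∇L₂·∇L₁ + O(h³)`. The corrections
`(h/4)‖∇L₁‖² + (hα²/4)‖∇L₂‖²` and `(hα/2)[∇L₁,∇L₂]` are exactly what makes the `h²`
coefficients agree; the computation uses the symmetry of the Hessians.
-/

open Filter Topology Asymptotics Set Metric InnerProductSpace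

/-- The pairs `(h, t)` with `h → 0⁺` and `t ∈ [0, h]`: a bound along this filter holds
uniformly in the time `t` during one step of size `h`. -/
def stepFilter : Filter (ℝ × ℝ) := comap Prod.fst (𝓝[>] 0) ⊓ 𝓟 {p | p.2 ∈ Icc 0 p.1}

theorem eventually_stepFilter_iff {P : ℝ × ℝ → Prop} :
    (∀ᶠ p in stepFilter, P p) ↔ ∀ᶠ h in 𝓝[>] 0, ∀ t ∈ Icc 0 h, P (h, t) := by
  simp only [stepFilter, eventually_inf_principal, eventually_comap, mem_ofPred_eq]
  exact eventually_congr (Eventually.of_forall fun h =>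
    ⟨fun H t ht => H (h, t) rfl ht, by rintro H ⟨_, t⟩ rfl; exact H t⟩)

theorem tendsto_fst_stepFilter : Tendsto Prod.fst stepFilter (𝓝 0) :=
  (tendsto_comap.mono_left inf_le_left).mono_right nhdsWithin_le_nhds

theorem tendsto_diag_stepFilter : Tendsto (fun h : ℝ => (h, h)) (𝓝[>] 0) stepFilter := by
  refine tendsto_inf.mpr ⟨tendsto_comap_iff.mpr tendsto_id, tendsto_principal.mpr ?_⟩
  filter_upwards [self_mem_nhdsWithin] with h hh using ⟨le_of_lt hh, le_rfl⟩

section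
variable {E : Type*} [NormedAddCommGroup E] [NormedSpace ℝ E]

theorem isBigO_stepFilter_pow_succ_of_hasDerivAt {f f' : ℝ → ℝ → E} {n : ℕ}
    (hf0 : ∀ᶠ h in 𝓝[>] 0, f h 0 = 0)
    (hf : ∀ᶠ h in 𝓝[>] 0, ∀ t ∈ Icc 0 h, HasDerivAt (f h) (f' h t) t)
    (hf' : (fun p : ℝ × ℝ => f' p.1 p.2) =O[stepFilter] fun p => p.1 ^ n) :
    (fun p : ℝ × ℝ => f p.1 p.2) =O[stepFilter] fun p => p.1 ^ (n + 1) := by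
  obtain ⟨C, hC0, hC⟩ := hf'.exists_nonneg
  have hC := eventually_stepFilter_iff.mp hC.bound
  refine IsBigO.of_bound C (eventually_stepFilter_iff.mpr ?_)
  filter_upwards [hf0, hf, hC] with h h0 hd hb t ht
  have hh : 0 ≤ h := ht.1.trans ht.2
  have hmvt := norm_image_sub_le_of_norm_deriv_le_segment' (C := C * h ^ n)
    (fun s hs => (hd s hs).hasDerivWithinAt)
    (fun s hs => by simpa [abs_of_nonneg hh] using hb s (Ico_subset_Icc_self hs)) t ht
  rw [h0, sub_zero, sub_zero] at hmvt
  calc ‖f h t‖ ≤ C * h ^ n * t := hmvt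
    _ ≤ C * h ^ n * h := by gcongr; exact ht.2
    _ = C * ‖h ^ (n + 1)‖ := by rw [norm_pow, Real.norm_of_nonneg hh]; ring

theorem norm_sub_le_mul_of_norm_deriv_lt {φ v : ℝ → E} {x₀ : E} {T M r : ℝ}
    (hφ0 : φ 0 = x₀) (hM : 0 ≤ M) (hMT : M * T ≤ r)
    (hd : ∀ t ∈ Icc 0 T, HasDerivAt φ (v t) t)
    (hv : ∀ t ∈ Icc 0 T, φ t ∈ closedBall x₀ r → ‖v t‖ < M) :
    ∀ t ∈ Icc 0 T, ‖φ t - x₀‖ ≤ M * t := by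
  refine image_norm_le_of_norm_deriv_right_lt_deriv_boundary' (B' := fun _ => M)
    (fun t ht => ((hd t ht).sub_const x₀).continuousAt.continuousWithinAt)
    (fun t ht => ((hd t (Ico_subset_Icc_self ht)).sub_const x₀).hasDerivWithinAt)
    (by simp [hφ0]) (continuousOn_const.mul continuousOn_id)
    (fun t _ => by simpa using (hasDerivAt_id t).const_mul M |>.hasDerivWithinAt)
    fun t ht heq => hv t (Ico_subset_Icc_self ht) ?_
  rw [mem_closedBall_iff_norm, heq]
  exact (mul_le_mul_of_nonneg_left ht.2.le hM).trans hMT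

theorem isBigO_stepFilter_sub_of_hasDerivAt {V : ℝ → E → E} {w : ℝ → ℝ → E} {w₀ : E}
    (hV : (fun p : ℝ × E => V p.1 p.2) =O[𝓝[>] 0 ×ˢ 𝓝 w₀] fun _ => (1 : ℝ))
    (hw0 : ∀ᶠ h in 𝓝[>] 0, w h 0 = w₀)
    (hw : ∀ᶠ h in 𝓝[>] 0, ∀ t ∈ Icc 0 h, HasDerivAt (w h) (V h (w h t)) t) :
    (fun p : ℝ × ℝ => w p.1 p.2 - w₀) =O[stepFilter] fun p => p.1 := by
  obtain ⟨C, hC0, hC⟩ := hV.exists_nonneg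
  obtain ⟨small, hsmall, near, hnear, hbound⟩ := eventually_prod_iff.mp hC.bound
  obtain ⟨r, hr, hball⟩ := nhds_basis_closedBall.eventually_iff.mp hnear
  have hM : 0 < C + 1 := by linarith
  have hstep : ∀ᶠ h in 𝓝[>] (0 : ℝ), (C + 1) * h ≤ r :=
    nhdsWithin_le_nhds <| (eventually_le_nhds (div_pos hr hM)).mono fun h hh =>
      by rwa [le_div_iff₀' hM] at hh
  refine IsBigO.of_bound (C + 1) (eventually_stepFilter_iff.mpr ?_)
  filter_upwards [hw0, hw, hsmall, hstep] with h h0 hd hh hMh t ht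
  have htraj := norm_sub_le_mul_of_norm_deriv_lt h0 hM.le hMh hd
    (fun s _ hs => by
      have := hbound hh (hball hs)
      rw [norm_one, mul_one] at this
      linarith) t ht
  rw [Real.norm_of_nonneg (ht.1.trans ht.2)]
  exact htraj.trans (mul_le_mul_of_nonneg_left ht.2 hM.le)

end

section Taylor
variable {E F : Type*} [NormedAddCommGroup E] [NormedSpace ℝ E]
  [NormedAddCommGroup F] [NormedSpace ℝ F]

theorem ContDiffAt.isBigO_sub_sub_fderiv {f : E → F} {x : E} (hf : ContDiffAt ℝ 2 f x) :
    (fun u => f u - f x - fderiv ℝ f x (u - x)) =O[𝓝 x] fun u => ‖u - x‖ ^ 2 := by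
  obtain ⟨C, hC0, hC⟩ := ((hf.fderiv_right (m := 1) le_rfl).differentiableAt
    one_ne_zero).isBigO_sub.exists_nonneg
  obtain ⟨ε, hε, hball⟩ := nhds_basis_ball.eventually_iff.mp
    ((hf.eventually (by simp)).and hC.bound)
  refine IsBigO.of_bound C ?_
  filter_upwards [ball_mem_nhds x hε] with u hu
  have hsub : closedBall x ‖u - x‖ ⊆ ball x ε :=
    closedBall_subset_ball (by rwa [← dist_eq_norm, ← mem_ball])
  have hmvt := (convex_closedBall x ‖u - x‖).norm_image_sub_le_of_norm_hasFDerivWithin_le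
    (f := fun v => f v - fderiv ℝ f x v) (C := C * ‖u - x‖) (x := x) (y := u)
    (fun v hv => (((hball (hsub hv)).1.differentiableAt two_ne_zero).hasFDerivAt.sub
      (fderiv ℝ f x).hasFDerivAt).hasFDerivWithinAt)
    (fun v hv => (hball (hsub hv)).2.trans
      (mul_le_mul_of_nonneg_left (mem_closedBall_iff_norm.mp hv) hC0))
    (mem_closedBall_self (norm_nonneg _)) (by simp [dist_eq_norm])
  rw [norm_pow, norm_norm, sq, ← mul_assoc]
  convert hmvt using 2
  simp only [map_sub]
  abel

theorem ContDiffAt.isBigO_line_sub_sub_fderiv {f : E → F} {x : E} (hf : ContDiffAt ℝ 2 f x)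
    (v : E) : (fun h : ℝ => f (x + h • v) - f x - h • fderiv ℝ f x v) =O[𝓝 0] fun h => h ^ 2 := by
  have hline : Tendsto (fun h : ℝ => x + h • v) (𝓝 0) (𝓝 x) := by
    simpa using ((continuous_id.smul continuous_const).const_add x).tendsto (0 : ℝ)
  refine ((hf.isBigO_sub_sub_fderiv.comp_tendsto hline).trans ?_).congr_left fun h => ?_
  · refine IsBigO.of_bound (‖v‖ ^ 2) (Eventually.of_forall fun h => le_of_eq ?_)
    simp only [Function.comp_apply, add_sub_cancel_left, norm_pow, norm_smul, norm_mul, norm_norm]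
    ring
  · simp [map_smul]

end Taylor

section ModifiedFlow
variable {E : Type*} [NormedAddCommGroup E] [NormedSpace ℝ E]
  {G H : E → E} {w : ℝ → ℝ → E} {w₀ : E}

theorem isBigO_flow_sub (hG : ContinuousAt G w₀) (hH : ContinuousAt H w₀)
    (hw0 : ∀ᶠ h in 𝓝[>] 0, w h 0 = w₀)
    (hw : ∀ᶠ h in 𝓝[>] 0, ∀ t ∈ Icc 0 h, HasDerivAt (w h) (G (w h t) + h • H (w h t)) t) :
    (fun p : ℝ × ℝ => w p.1 p.2 - w₀) =O[stepFilter] fun p => p.1 := by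
  refine isBigO_stepFilter_sub_of_hasDerivAt (V := fun h u => G u + h • H u) ?_ hw0 hw
  have h0 : Tendsto (fun p : ℝ × E => p.1) (𝓝[>] 0 ×ˢ 𝓝 w₀) (𝓝 0) :=
    tendsto_fst.mono_right nhdsWithin_le_nhds
  exact ((hG.tendsto.comp tendsto_snd).add
    (h0.smul (hH.tendsto.comp tendsto_snd))).isBigO_one ℝ

theorem isBigO_flow_sub_linear (hG : DifferentiableAt ℝ G w₀) (hH : ContinuousAt H w₀)
    (hw0 : ∀ᶠ h in 𝓝[>] 0, w h 0 = w₀)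
    (hw : ∀ᶠ h in 𝓝[>] 0, ∀ t ∈ Icc 0 h, HasDerivAt (w h) (G (w h t) + h • H (w h t)) t) :
    (fun p : ℝ × ℝ => w p.1 p.2 - w₀ - p.2 • G w₀) =O[stepFilter] fun p => p.1 ^ 2 := by
  have hw1 := isBigO_flow_sub hG.continuousAt hH hw0 hw
  have hlim : Tendsto (fun p : ℝ × ℝ => w p.1 p.2) stepFilter (𝓝 w₀) :=
    tendsto_sub_nhds_zero_iff.mp (hw1.trans_tendsto tendsto_fst_stepFilter)
  refine isBigO_stepFilter_pow_succ_of_hasDerivAt (f := fun h t => w h t - w₀ - t • G w₀)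
    (f' := fun h t => G (w h t) - G w₀ + h • H (w h t))
    (by filter_upwards [hw0] with h h0; simp [h0]) ?_ ?_
  · filter_upwards [hw] with h hd t ht
    refine (((hd t ht).sub_const w₀).sub ((hasDerivAt_id t).smul_const (G w₀))).congr_deriv ?_
    simp only [one_smul]
    abel
  · have hGw : (fun p : ℝ × ℝ => G (w p.1 p.2) - G w₀) =O[stepFilter] fun p => p.1 :=
      (hG.isBigO_sub.comp_tendsto hlim).trans hw1
    have hHw : (fun p : ℝ × ℝ => p.1 • H (w p.1 p.2)) =O[stepFilter] fun p => p.1 := by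
      simpa using (isBigO_refl Prod.fst stepFilter).smul
        ((hH.tendsto.comp hlim).isBigO_one ℝ)
    simpa only [pow_one] using hGw.add hHw

theorem isBigO_flow_sub_taylor (hG : ContDiffAt ℝ 2 G w₀) (hH : DifferentiableAt ℝ H w₀)
    (hw0 : ∀ᶠ h in 𝓝[>] 0, w h 0 = w₀)
    (hw : ∀ᶠ h in 𝓝[>] 0, ∀ t ∈ Icc 0 h, HasDerivAt (w h) (G (w h t) + h • H (w h t)) t) :
    (fun h : ℝ => w h h - (w₀ + h • (G w₀ + h • H w₀) + (h ^ 2 / 2) • fderiv ℝ G w₀ (G w₀)))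
      =O[𝓝[>] 0] fun h => h ^ 3 := by
  set A := fderiv ℝ G w₀
  have hw1 := isBigO_flow_sub hG.continuousAt hH.continuousAt hw0 hw
  have hlim : Tendsto (fun p : ℝ × ℝ => w p.1 p.2) stepFilter (𝓝 w₀) :=
    tendsto_sub_nhds_zero_iff.mp (hw1.trans_tendsto tendsto_fst_stepFilter)
  have hw2 := isBigO_flow_sub_linear (hG.differentiableAt two_ne_zero) hH.continuousAt hw0 hw
  refine IsBigO.comp_tendsto (l := stepFilter) (g := fun p : ℝ × ℝ => p.1 ^ 3)
    (f := fun p : ℝ × ℝ =>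
      w p.1 p.2 - (w₀ + p.2 • (G w₀ + p.1 • H w₀) + (p.2 ^ 2 / 2) • A (G w₀)))
    ?_ tendsto_diag_stepFilter
  refine isBigO_stepFilter_pow_succ_of_hasDerivAt (f := fun h t =>
      w h t - (w₀ + t • (G w₀ + h • H w₀) + (t ^ 2 / 2) • A (G w₀)))
    (f' := fun h t => (G (w h t) - G w₀ - A (w h t - w₀)) + A (w h t - w₀ - t • G w₀)
      + h • (H (w h t) - H w₀))
    (by filter_upwards [hw0] with h h0; simp [h0]) ?_ ?_
  · filter_upwards [hw] with h hd t ht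
    have hpoly : HasDerivAt (fun t => w₀ + t • (G w₀ + h • H w₀) + (t ^ 2 / 2) • A (G w₀))
        (G w₀ + h • H w₀ + t • A (G w₀)) t := by
      refine ((((hasDerivAt_id t).smul_const (G w₀ + h • H w₀)).const_add w₀).add
        (((hasDerivAt_pow 2 t).div_const 2).smul_const (A (G w₀)))).congr_deriv ?_
      simp
    refine ((hd t ht).sub hpoly).congr_deriv ?_
    simp only [map_sub, map_smul]
    module
  · have hTaylor : (fun p : ℝ × ℝ => G (w p.1 p.2) - G w₀ - A (w p.1 p.2 - w₀))
        =O[stepFilter] fun p => p.1 ^ 2 :=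
      (hG.isBigO_sub_sub_fderiv.comp_tendsto hlim).trans (hw1.norm_left.pow 2)
    have hHw : (fun p : ℝ × ℝ => p.1 • (H (w p.1 p.2) - H w₀))
        =O[stepFilter] fun p => p.1 ^ 2 := by
      simpa [sq] using (isBigO_refl Prod.fst stepFilter).smul
        ((hH.isBigO_sub.comp_tendsto hlim).trans hw1)
    exact (hTaylor.add ((A.isBigO_comp _ _).trans hw2)).add hHw

end ModifiedFlow

section Gradient
variable {E : Type*} [NormedAddCommGroup E] [InnerProductSpace ℝ E] [CompleteSpace E]
  {f : E → ℝ} {u : E}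

theorem ContDiffAt.gradient {n m : WithTop ℕ∞} (hf : ContDiffAt ℝ n f u) (hmn : m + 1 ≤ n) :
    ContDiffAt ℝ m (gradient f) u :=
  (toDual ℝ E).symm.contDiff.contDiffAt.comp u (hf.fderiv_right hmn)

theorem inner_fderiv_gradient_apply (f : E → ℝ) (u x y : E) :
    ⟪fderiv ℝ (gradient f) u x, y⟫_ℝ = fderiv ℝ (fderiv ℝ f) u x y := by
  change ⟪fderiv ℝ ((toDual ℝ E).symm ∘ fderiv ℝ f) u x, y⟫_ℝ = _
  rw [LinearIsometryEquiv.comp_fderiv]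
  exact toDual_symm_apply

theorem inner_fderiv_gradient_comm (hf : ContDiffAt ℝ 2 f u) (x y : E) :
    ⟪fderiv ℝ (gradient f) u x, y⟫_ℝ = ⟪x, fderiv ℝ (gradient f) u y⟫_ℝ := by
  rw [real_inner_comm _ x, inner_fderiv_gradient_apply, inner_fderiv_gradient_apply,
    (hf.isSymmSndFDerivAt (by simp)) x y]

theorem hasGradientAt_norm_sq_gradient (hf : ContDiffAt ℝ 2 f u) :
    HasGradientAt (fun v => ‖gradient f v‖ ^ 2)
      ((2 : ℝ) • fderiv ℝ (gradient f) u (gradient f u)) u := by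
  rw [hasGradientAt_iff_hasFDerivAt]
  refine (((hf.gradient (m := 1) le_rfl).differentiableAt one_ne_zero).hasFDerivAt.norm_sq
    ).congr_fderiv (ContinuousLinearMap.ext fun z => ?_)
  simp [inner_fderiv_gradient_comm hf]

theorem gradient_modifiedLoss {L₁ L₂ : E → ℝ} (hL₁ : ContDiffAt ℝ 2 L₁ u)
    (hL₂ : ContDiffAt ℝ 2 L₂ u) (α h : ℝ) :
    gradient (fun v => L₁ v + α * L₂ v + (h / 4) * ‖gradient L₁ v‖ ^ 2
      + (h * α ^ 2 / 4) * ‖gradient L₂ v‖ ^ 2) u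
      = gradient L₁ u + α • gradient L₂ u
        + (h / 2) • fderiv ℝ (gradient L₁) u (gradient L₁ u)
        + (h * α ^ 2 / 2) • fderiv ℝ (gradient L₂) u (gradient L₂ u) := by
  have d₁ := (hL₁.differentiableAt two_ne_zero).hasGradientAt.hasFDerivAt
  have d₂ := (hL₂.differentiableAt two_ne_zero).hasGradientAt.hasFDerivAt
  have n₁ := (hasGradientAt_norm_sq_gradient hL₁).hasFDerivAt
  have n₂ := (hasGradientAt_norm_sq_gradient hL₂).hasFDerivAt
  refine HasGradientAt.gradient (hasGradientAt_iff_hasFDerivAt.mpr ?_)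
  refine (((d₁.add (d₂.const_mul α)).add (n₁.const_mul (h / 4))).add
    (n₂.const_mul (h * α ^ 2 / 4))).congr_fderiv (ContinuousLinearMap.ext fun z => ?_)
  simp only [map_add, map_smul, add_apply, smul_apply, toDual_apply_apply, smul_eq_mul]
  ring

noncomputable def leadingField (L₁ L₂ : E → ℝ) (α : ℝ) (u : E) : E :=
  -(gradient L₁ u + α • gradient L₂ u)

noncomputable def correctionField (L₁ L₂ : E → ℝ) (α : ℝ) (u : E) : E :=
  (α / 2) • VectorField.lieBracket ℝ (gradient L₁) (gradient L₂) u
    - (2⁻¹ : ℝ) • fderiv ℝ (gradient L₁) u (gradient L₁ u)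
    - (α ^ 2 / 2) • fderiv ℝ (gradient L₂) u (gradient L₂ u)

theorem modifiedField_eq {L₁ L₂ : E → ℝ} (hL₁ : ContDiffAt ℝ 2 L₁ u)
    (hL₂ : ContDiffAt ℝ 2 L₂ u) (α h : ℝ) :
    -gradient (fun v => L₁ v + α * L₂ v + (h / 4) * ‖gradient L₁ v‖ ^ 2
        + (h * α ^ 2 / 4) * ‖gradient L₂ v‖ ^ 2) u
      + (h * α / 2) • VectorField.lieBracket ℝ (gradient L₁) (gradient L₂) u
      = leadingField L₁ L₂ α u + h • correctionField L₁ L₂ α u := by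
  rw [gradient_modifiedLoss hL₁ hL₂, leadingField, correctionField]
  module

theorem hasFDerivAt_leadingField {L₁ L₂ : E → ℝ} (hL₁ : ContDiffAt ℝ 2 L₁ u)
    (hL₂ : ContDiffAt ℝ 2 L₂ u) (α : ℝ) :
    HasFDerivAt (leadingField L₁ L₂ α)
      (-(fderiv ℝ (gradient L₁) u + α • fderiv ℝ (gradient L₂) u)) u :=
  (((hL₁.gradient (m := 1) le_rfl).differentiableAt one_ne_zero).hasFDerivAt.add
    (((hL₂.gradient (m := 1) le_rfl).differentiableAt one_ne_zero).hasFDerivAt.const_smul α)).neg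

theorem contDiffAt_leadingField {L₁ L₂ : E → ℝ} (hL₁ : ContDiffAt ℝ 3 L₁ u)
    (hL₂ : ContDiffAt ℝ 3 L₂ u) (α : ℝ) : ContDiffAt ℝ 2 (leadingField L₁ L₂ α) u :=
  ((hL₁.gradient (by norm_num)).add ((hL₂.gradient (by norm_num)).const_smul α)).neg

theorem differentiableAt_correctionField {L₁ L₂ : E → ℝ} (hL₁ : ContDiffAt ℝ 3 L₁ u)
    (hL₂ : ContDiffAt ℝ 3 L₂ u) (α : ℝ) : DifferentiableAt ℝ (correctionField L₁ L₂ α) u := by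
  have hg₁ : ContDiffAt ℝ 2 (gradient L₁) u := hL₁.gradient (by norm_num)
  have hg₂ : ContDiffAt ℝ 2 (gradient L₂) u := hL₂.gradient (by norm_num)
  have d₁ := hg₁.differentiableAt two_ne_zero
  have d₂ := hg₂.differentiableAt two_ne_zero
  have D₁ := (hg₁.fderiv_right (m := 1) le_rfl).differentiableAt one_ne_zero
  have D₂ := (hg₂.fderiv_right (m := 1) le_rfl).differentiableAt one_ne_zero
  exact ((((D₂.clm_apply d₁).sub (D₁.clm_apply d₂)).const_smul (α / 2)).sub
    ((D₁.clm_apply d₁).const_smul (2⁻¹ : ℝ))).sub ((D₂.clm_apply d₂).const_smul (α ^ 2 / 2))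

theorem correctionField_add_half_fderiv_leadingField {L₁ L₂ : E → ℝ} (hL₁ : ContDiffAt ℝ 2 L₁ u)
    (hL₂ : ContDiffAt ℝ 2 L₂ u) (α : ℝ) :
    correctionField L₁ L₂ α u
        + (2⁻¹ : ℝ) • fderiv ℝ (leadingField L₁ L₂ α) u (leadingField L₁ L₂ α u)
      = α • fderiv ℝ (gradient L₂) u (gradient L₁ u) := by
  rw [(hasFDerivAt_leadingField hL₁ hL₂ α).fderiv, correctionField, leadingField,
    VectorField.lieBracket_eq]
  simp only [neg_apply, add_apply, smul_apply, map_neg, map_add, map_smul]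
  module

end Gradient

theorem stmt_4_general (d : ℕ) (L₁ L₂ : EuclideanSpace ℝ (Fin d) → ℝ)
    (hL₁ : ContDiff ℝ 3 L₁) (hL₂ : ContDiff ℝ 3 L₂) (α : ℝ)
    (w₀ : EuclideanSpace ℝ (Fin d))
    (w : ℝ → ℝ → EuclideanSpace ℝ (Fin d))
    (hw0 : ∀ᶠ h in nhdsWithin (0 : ℝ) (Set.Ioi 0), w h 0 = w₀)
    (hw : ∀ᶠ h in nhdsWithin (0 : ℝ) (Set.Ioi 0), ∀ t ∈ Set.Icc (0 : ℝ) h,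
      HasDerivAt (w h)
        (-gradient (fun u => L₁ u + α * L₂ u + (h / 4) * ‖gradient L₁ u‖ ^ 2
              + (h * α ^ 2 / 4) * ‖gradient L₂ u‖ ^ 2) (w h t)
          + (h * α / 2) •
            (fderiv ℝ (gradient L₂) (w h t) (gradient L₁ (w h t))
              - fderiv ℝ (gradient L₁) (w h t) (gradient L₂ (w h t)))) t) :
    (fun h : ℝ =>
        w h h - ((w₀ - h • gradient L₁ w₀)
          - (α * h) • gradient L₂ (w₀ - h • gradient L₁ w₀)))
      =O[nhdsWithin 0 (Set.Ioi 0)] (fun h : ℝ => h ^ 3) := by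
  have hL₁' : ContDiff ℝ 2 L₁ := hL₁.of_le (by norm_num)
  have hL₂' : ContDiff ℝ 2 L₂ := hL₂.of_le (by norm_num)
  have hflow := isBigO_flow_sub_taylor (contDiffAt_leadingField hL₁.contDiffAt hL₂.contDiffAt α)
    (differentiableAt_correctionField hL₁.contDiffAt hL₂.contDiffAt α) hw0
    (hw.mono fun h hh t ht => (hh t ht).congr_deriv
      (modifiedField_eq hL₁'.contDiffAt hL₂'.contDiffAt α h))
  have hstep := (((hL₂.contDiffAt (x := w₀)).gradient (by norm_num)).isBigO_line_sub_sub_fderiv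
    (-gradient L₁ w₀)).mono (nhdsWithin_le_nhds (s := Ioi 0))
  have hsum := hflow.add ((((isBigO_refl (fun h : ℝ => h) (𝓝[>] 0)).const_mul_left α).smul
    hstep).congr_right fun h => by simp only [smul_eq_mul]; ring)
  have hcoeff := correctionField_add_half_fderiv_leadingField (u := w₀)
    hL₁'.contDiffAt hL₂'.contDiffAt α
  refine hsum.congr_left fun h => ?_
  simp only [leadingField, smul_neg, ← sub_eq_add_neg, map_neg] at hcoeff ⊢
  linear_combination (norm := module) (-h ^ 2) • hcoeff

/-- **Modified equation theorem (Theorem 2 of the paper).**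
Two consecutive gradient updates (step `h` on `L₁`, then step `αh` on `L₂`) are shadowed,
up to `O(h³)` as `h → 0⁺`, by the time-`h` solution of the modified equation
`ẇ = −∇L̃_h(w) + (hα/2)[∇L₁,∇L₂](w)` started at `w₀`, where
`L̃_h(w) = L₁(w) + αL₂(w) + (h/4)‖∇L₁(w)‖² + (hα²/4)‖∇L₂(w)‖²`. -/
theorem stmt_4 (d : ℕ) (L₁ L₂ : EuclideanSpace ℝ (Fin d) → ℝ)
    (hL₁ : ContDiff ℝ 3 L₁) (hL₂ : ContDiff ℝ 3 L₂) (α : ℝ) (hα : 0 < α)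
    (w₀ : EuclideanSpace ℝ (Fin d))
    (w : ℝ → ℝ → EuclideanSpace ℝ (Fin d))
    (hw0 : ∀ᶠ h in nhdsWithin (0 : ℝ) (Set.Ioi 0), w h 0 = w₀)
    (hw : ∀ᶠ h in nhdsWithin (0 : ℝ) (Set.Ioi 0), ∀ t ∈ Set.Icc (0 : ℝ) h,
      HasDerivAt (w h)
        (-gradient (fun u => L₁ u + α * L₂ u + (h / 4) * ‖gradient L₁ u‖ ^ 2
              + (h * α ^ 2 / 4) * ‖gradient L₂ u‖ ^ 2) (w h t)
          + (h * α / 2) •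
            (fderiv ℝ (gradient L₂) (w h t) (gradient L₁ (w h t))
              - fderiv ℝ (gradient L₁) (w h t) (gradient L₂ (w h t)))) t) :
    (fun h : ℝ =>
        w h h - ((w₀ - h • gradient L₁ w₀)
          - (α * h) • gradient L₂ (w₀ - h • gradient L₁ w₀)))
      =O[nhdsWithin 0 (Set.Ioi 0)] (fun h : ℝ => h ^ 3) :=
  stmt_4_general d L₁ L₂ hL₁ hL₂ α w₀ w hw0 hw
end

section
/- Let r ∈ ℕ, networks f and f' as in the deep fusion setting with a common input dimension (dims 0 = dims' 0) and a common output dimension k = dims r = dims' r. Define DF(f,f')(x) as the fused network applied to the duplicated input Sum.elim x x followed by averaging the two halves of the output: (DF(f,f')(x)) c = ((F(f,f')(Sum.elim x x)) (Sum.inl c) + (F(f,f')(Sum.elim x x)) (Sum.inr c)) / 2. Then for every x and every output coordinate c, (DF(f,f')(x)) c = ((f x) c + (f' x) c) / 2; that is, immediately after deep fusion the fused model computes exactly the average ensemble of the two models. -/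
/-- The forward pass of a fully connected network: `a₀ = x` and
`a_{k+1} = φ_k(a_k w_k + b_k)` with the activation applied entrywise. -/
noncomputable def forward (dims : ℕ → ℕ)
    (w : ∀ k : ℕ, Matrix (Fin (dims k)) (Fin (dims (k + 1))) ℝ)
    (b : ∀ k : ℕ, Fin (dims (k + 1)) → ℝ)
    (φ : ℕ → ℝ → ℝ) (x : Fin (dims 0) → ℝ) : ∀ k : ℕ, Fin (dims k) → ℝ
  | 0 => x
  | k + 1 => fun c => φ k ((Matrix.vecMul (forward dims w b φ x k) (w k) + b k) c)

/-- The forward pass of the deep fusion of two networks (block-diagonal weights,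
concatenated biases, concatenated input). -/
noncomputable def fusedForward (dims dims' : ℕ → ℕ)
    (w : ∀ k : ℕ, Matrix (Fin (dims k)) (Fin (dims (k + 1))) ℝ)
    (w' : ∀ k : ℕ, Matrix (Fin (dims' k)) (Fin (dims' (k + 1))) ℝ)
    (b : ∀ k : ℕ, Fin (dims (k + 1)) → ℝ)
    (b' : ∀ k : ℕ, Fin (dims' (k + 1)) → ℝ)
    (φ : ℕ → ℝ → ℝ) (x : Fin (dims 0) → ℝ) (x' : Fin (dims' 0) → ℝ) :
    ∀ k : ℕ, (Fin (dims k) ⊕ Fin (dims' k)) → ℝ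
  | 0 => Sum.elim x x'
  | k + 1 => fun c => φ k
      ((Matrix.vecMul (fusedForward dims dims' w w' b b' φ x x' k)
          (Matrix.fromBlocks (w k) 0 0 (w' k)) + Sum.elim (b k) (b' k)) c)


theorem fused_eq (dims dims' : ℕ → ℕ)
    (w : ∀ k : ℕ, Matrix (Fin (dims k)) (Fin (dims (k + 1))) ℝ)
    (w' : ∀ k : ℕ, Matrix (Fin (dims' k)) (Fin (dims' (k + 1))) ℝ)
    (b : ∀ k : ℕ, Fin (dims (k + 1)) → ℝ)
    (b' : ∀ k : ℕ, Fin (dims' (k + 1)) → ℝ)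
    (φ : ℕ → ℝ → ℝ) (x : Fin (dims 0) → ℝ) (x' : Fin (dims' 0) → ℝ) (k : ℕ) :
    fusedForward dims dims' w w' b b' φ x x' k
      = Sum.elim (forward dims w b φ x k) (forward dims' w' b' φ x' k) := by
  induction k with
  | zero => rfl
  | succ k ih =>
    funext c
    cases c with
    | inl c =>
      simp [fusedForward, forward, ih, Matrix.vecMul, dotProduct,
        Fintype.sum_sum_type, Matrix.fromBlocks]
    | inr c =>
      simp [fusedForward, forward, ih, Matrix.vecMul, dotProduct,
        Fintype.sum_sum_type, Matrix.fromBlocks]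

/-- **Deep fusion computes the average ensemble.** For networks `f`, `f'` with common
input dimension (`dims' 0 = dims 0`) and common output dimension (`dims' r = dims r`),
the deep fused model `DF(f,f')`, evaluated on the duplicated input `[x, x]` and
averaging the two halves of the output, computes `((f x) c + (f' x) c) / 2` at every
output coordinate `c`. -/
theorem stmt_13 (r : ℕ) (dims dims' : ℕ → ℕ)
    (h0 : dims' 0 = dims 0) (hr : dims' r = dims r)
    (w : ∀ k : ℕ, Matrix (Fin (dims k)) (Fin (dims (k + 1))) ℝ)
    (w' : ∀ k : ℕ, Matrix (Fin (dims' k)) (Fin (dims' (k + 1))) ℝ)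
    (b : ∀ k : ℕ, Fin (dims (k + 1)) → ℝ)
    (b' : ∀ k : ℕ, Fin (dims' (k + 1)) → ℝ)
    (φ : ℕ → ℝ → ℝ) (x : Fin (dims 0) → ℝ) (c : Fin (dims r)) :
    (fusedForward dims dims' w w' b b' φ x (fun c' => x (Fin.cast h0 c')) r (Sum.inl c)
        + fusedForward dims dims' w w' b b' φ x (fun c' => x (Fin.cast h0 c')) r
            (Sum.inr (Fin.cast hr.symm c))) / 2
      = (forward dims w b φ x r c
          + forward dims' w' b' φ (fun c' => x (Fin.cast h0 c')) r
              (Fin.cast hr.symm c)) / 2 := by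
  simp [fused_eq]
end
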